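/- If Y is a real random variable with E[|Y|^{1+ε}] ≤ a for some ε > 0 and a ≥ 0, then for every σ ≥ 1 the expected Huber loss satisfies E[ℓ_σ(Y)] ≤ 2(a+1)(σ^{max(1−ε,0)} + σ^{1−ε}). -/
import Mathlib

open MeasureTheory

noncomputable def huber (σ t : ℝ) : ℝ := if |t| ≤ σ then t ^ 2 else 2 * σ * |t| - σ ^ 2

lemma huber_nonneg {σ t : ℝ} (hσ : 1 ≤ σ) : 0 ≤ huber σ t := by
  unfold huber
  split_ifs with h
  · positivity
  · push_neg at h
    nlinarith [abs_nonneg t]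

lemma huber_le {ε : ℝ} (hε : 0 < ε) {σ : ℝ} (hσ : 1 ≤ σ) (t : ℝ) :
    huber σ t ≤ 2 * (|t| ^ (1 + ε) + 1) * (σ ^ max (1 - ε) 0 + σ ^ (1 - ε)) := by
  have hσ0 : (0:ℝ) < σ := lt_of_lt_of_le one_pos hσ
  have hA : 0 ≤ |t| ^ (1 + ε) := Real.rpow_nonneg (abs_nonneg t) _
  have hB : 1 ≤ σ ^ max (1 - ε) 0 := Real.one_le_rpow hσ (le_max_right _ _)
  have hC : 0 < σ ^ (1 - ε) := Real.rpow_pos_of_pos hσ0 _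
  unfold huber
  split_ifs with h
  · -- t^2 ≤ σ^max * (|t|^(1+ε) + 1)
    have key : t ^ 2 ≤ σ ^ max (1 - ε) 0 * (|t| ^ (1 + ε) + 1) := by
      rcases le_or_gt (|t|) 1 with ht | ht
      · have : t ^ 2 ≤ 1 := by nlinarith [abs_nonneg t, sq_abs t]
        nlinarith
      · have ht0 : (0:ℝ) < |t| := lt_trans one_pos ht
        have h2 : t ^ 2 = |t| ^ (1 + ε) * |t| ^ (1 - ε) := by
          rw [← Real.rpow_add ht0]
          norm_num
        have h3 : |t| ^ (1 - ε) ≤ σ ^ max (1 - ε) 0 := by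
          rcases le_or_gt (1 - ε) 0 with hle | hlt
          · calc |t| ^ (1 - ε) ≤ 1 :=
                  Real.rpow_le_one_of_one_le_of_nonpos ht.le hle
              _ ≤ σ ^ max (1 - ε) 0 := hB
          · rw [max_eq_left hlt.le]
            exact Real.rpow_le_rpow ht0.le h hlt.le
        calc t ^ 2 = |t| ^ (1 + ε) * |t| ^ (1 - ε) := h2
          _ ≤ |t| ^ (1 + ε) * (σ ^ max (1 - ε) 0) := by
              exact mul_le_mul_of_nonneg_left h3 hA
          _ ≤ σ ^ max (1 - ε) 0 * (|t| ^ (1 + ε) + 1) := by nlinarith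
    nlinarith
  · push_neg at h
    have ht0 : (0:ℝ) < |t| := lt_trans hσ0 h
    have key : |t| ≤ |t| ^ (1 + ε) * σ ^ (-ε) := by
      have h1 : |t| = |t| ^ (1 + ε) * |t| ^ (-ε) := by
        rw [← Real.rpow_add ht0]; norm_num
      have h2 : |t| ^ (-ε) ≤ σ ^ (-ε) := by
        apply Real.rpow_le_rpow_of_nonpos hσ0 h.le (by linarith)
      calc |t| = |t| ^ (1 + ε) * |t| ^ (-ε) := h1
        _ ≤ |t| ^ (1 + ε) * σ ^ (-ε) := mul_le_mul_of_nonneg_left h2 hA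
    have hmul : 2 * σ * |t| ≤ 2 * σ ^ (1 - ε) * |t| ^ (1 + ε) := by
      have : σ * (|t| ^ (1 + ε) * σ ^ (-ε)) = σ ^ (1 - ε) * |t| ^ (1 + ε) := by
        rw [mul_comm (|t| ^ (1 + ε)) (σ ^ (-ε:ℝ)), ← mul_assoc]
        congr 1
        rw [show (1 - ε) = 1 + (-ε) by ring, Real.rpow_add hσ0, Real.rpow_one]
      nlinarith [mul_le_mul_of_nonneg_left key hσ0.le]
    nlinarith [sq_nonneg σ, hC.le, mul_le_mul_of_nonneg_left hmul (le_of_lt (by positivity : (0:ℝ) < 1))]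

/-- Expected Huber loss bound under a weak `(1+ε)`-moment condition:
`E[ℓ_σ(Y)] ≤ 2(a+1)(σ^{max(1-ε,0)} + σ^{1-ε})` for every `σ ≥ 1`. -/
theorem expected_huber_bound {Ω : Type*} [MeasurableSpace Ω] (μ : Measure Ω)
    [IsProbabilityMeasure μ]
    (Y : Ω → ℝ) (hY : Measurable Y) (ε a : ℝ) (hε : 0 < ε) (ha : 0 ≤ a)
    (hint : Integrable (fun ω => |Y ω| ^ (1 + ε)) μ)
    (hmom : ∫ ω, |Y ω| ^ (1 + ε) ∂μ ≤ a) :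
    ∀ σ : ℝ, 1 ≤ σ →
      (∫ ω, huber σ (Y ω) ∂μ) ≤ 2 * (a + 1) * (σ ^ max (1 - ε) 0 + σ ^ (1 - ε)) := by
  intro σ hσ
  have hσ0 : (0:ℝ) < σ := lt_of_lt_of_le one_pos hσ
  set c : ℝ := σ ^ max (1 - ε) 0 + σ ^ (1 - ε) with hc
  have hcpos : 0 < c := by
    have hB : (0:ℝ) < σ ^ max (1 - ε) 0 := Real.rpow_pos_of_pos hσ0 _
    have hC : (0:ℝ) < σ ^ (1 - ε) := Real.rpow_pos_of_pos hσ0 _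
    positivity
  -- the dominating function
  have hgint : Integrable (fun ω => 2 * (|Y ω| ^ (1 + ε) + 1) * c) μ :=
    (((hint.add (integrable_const 1)).const_mul 2).mul_const c)
  have hmeas : Measurable fun ω => huber σ (Y ω) := by
    unfold huber
    exact Measurable.ite (measurableSet_le hY.abs measurable_const)
      (hY.pow_const 2) (((hY.abs.const_mul _).sub measurable_const))
  have hhint : Integrable (fun ω => huber σ (Y ω)) μ := by
    apply hgint.mono' hmeas.aestronglyMeasurable
    filter_upwards with ω
    rw [Real.norm_eq_abs, abs_of_nonneg (huber_nonneg hσ)]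
    exact huber_le hε hσ (Y ω)
  calc ∫ ω, huber σ (Y ω) ∂μ ≤ ∫ ω, 2 * (|Y ω| ^ (1 + ε) + 1) * c ∂μ := by
        apply integral_mono hhint hgint
        intro ω; exact huber_le hε hσ (Y ω)
    _ = 2 * ((∫ ω, |Y ω| ^ (1 + ε) ∂μ) + 1) * c := by
        rw [integral_mul_const, integral_const_mul, integral_add hint (integrable_const 1),
          integral_const]
        simp
    _ ≤ 2 * (a + 1) * c := by
        have := hmom
        nlinarith [hcpos.le]
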